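/- Let p, q be two positive insular numbers of a set S ⊆ ℝ≥0 (each satisfies both [x/2,x) ∩ S = ∅ and (x,2x] ∩ S = ∅), with p, q < r for some r ∈ S, and suppose S is inversely well ordered with ⊕ defined as usual. Then p ⊕ q = max(p, q) < r. -/
import Mathlib


/-- `x` is an insular number of `S`: both initial (`[x/2,x) ∩ S = ∅`) and a jump
number (`(x,2x] ∩ S = ∅`). -/
def Insular (S : Set ℝ) (x : ℝ) : Prop :=
  (∀ u ∈ S, ¬ (x / 2 ≤ u ∧ u < x)) ∧ (∀ u ∈ S, ¬ (x < u ∧ u ≤ 2 * x))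

theorem stmt14 (S : Set ℝ) (hS : S ⊆ Set.Ici (0:ℝ)) (h0 : (0:ℝ) ∈ S)
    (hiwo : ∀ T : Set ℝ, T ⊆ S → T.Nonempty → BddAbove T → ∃ m, IsGreatest T m)
    (op : ℝ → ℝ → ℝ)
    (hop : ∀ r ∈ S, ∀ t ∈ S, IsGreatest {u : ℝ | u ∈ S ∧ u ≤ r + t} (op r t))
    (p q r : ℝ) (hp : p ∈ S) (hq : q ∈ S) (hr : r ∈ S)
    (hppos : 0 < p) (hqpos : 0 < q) (hpr : p < r) (hqr : q < r)
    (hpins : Insular S p) (hqins : Insular S q) :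
    op p q = max p q ∧ max p q < r := by
  obtain ⟨hmem, hub⟩ := hop p hp q hq
  obtain ⟨hopS, hople⟩ := hmem
  have hmaxlt : max p q < r := max_lt hpr hqr
  refine ⟨?_, hmaxlt⟩
  have hge : max p q ≤ op p q := by
    rcases le_total p q with h | h
    · rw [max_eq_right h]; exact hub ⟨hq, by linarith⟩
    · rw [max_eq_left h]; exact hub ⟨hp, by linarith⟩
  have hle : op p q ≤ max p q := by
    by_contra hlt
    push_neg at hlt
    rcases le_total p q with h | h
    · rw [max_eq_right h] at hlt
      exact hqins.2 _ hopS ⟨hlt, by linarith⟩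
    · rw [max_eq_left h] at hlt
      exact hpins.2 _ hopS ⟨hlt, by linarith⟩
  linarith
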